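/- In a median graph G with a fixed basepoint v₀, the map v ↦ ℰ⁻(v) assigning to each vertex the set of Θ-classes of its ingoing edges is a bijection from the vertex set V onto the set of all POFs of G; in particular, the number of POFs of G equals the number n of vertices, and for every POF X the unique vertex v_X with ℰ⁻(v_X) = X is the closest-to-v₀ vertex v such that X ⊆ ℰ⁻(v). -/

import Mathlib

namespace MedianPaper

variable {V : Type*}

/-- The metric interval `I(u,v)`: vertices on shortest `(u,v)`-paths. -/
def interval (G : SimpleGraph V) (u v : V) : Set V :=
  {w | G.dist u w + G.dist w v = G.dist u v}

/-- A median graph: a connected graph in which every triple of vertices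
has a unique median. -/
def MedianGraph (G : SimpleGraph V) : Prop :=
  G.Connected ∧ ∀ x y z : V, ∃! m : V,
    m ∈ interval G x y ∧ m ∈ interval G y z ∧ m ∈ interval G z x

/-- `u v x y` span a 4-cycle `u-v-y-x-u`, with opposite edge pairs
`(uv, xy)` and `(ux, vy)`. -/
def IsSquare (G : SimpleGraph V) (u v x y : V) : Prop :=
  G.Adj u v ∧ G.Adj x y ∧ G.Adj u x ∧ G.Adj v y ∧ u ≠ y ∧ v ≠ x

/-- Two edges are in relation Θ₀ if they are opposite edges of a common 4-cycle. -/
def Theta0 (G : SimpleGraph V) (e f : Sym2 V) : Prop :=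
  ∃ u v x y : V, IsSquare G u v x y ∧ e = s(u, v) ∧ f = s(x, y)

/-- Θ : the reflexive-transitive closure of Θ₀ on the edges of `G`. -/
def Theta (G : SimpleGraph V) (e f : Sym2 V) : Prop :=
  e ∈ G.edgeSet ∧ f ∈ G.edgeSet ∧ Relation.ReflTransGen (Theta0 G) e f

/-- The Θ-classes of `G`: equivalence classes of edges under Θ. -/
def ThetaClass (G : SimpleGraph V) (C : Set (Sym2 V)) : Prop :=
  ∃ e ∈ G.edgeSet, C = {f | Theta G e f}

/-- The edge set `C` separates `u` from `v` : they lie in different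
components of `G` minus `C`. -/
def Separates (G : SimpleGraph V) (C : Set (Sym2 V)) (u v : V) : Prop :=
  ¬ (G.deleteEdges C).Reachable u v

/-- The signature `σ_{u,v}`: Θ-classes separating `u` from `v`. -/
def signature (G : SimpleGraph V) (u v : V) : Set (Set (Sym2 V)) :=
  {C | ThetaClass G C ∧ Separates G C u v}

/-- `H`, `H'` are the two connected components (halfspaces) of `G` deprived
of the edges in `C`. -/
def IsHalfspacePair (G : SimpleGraph V) (C : Set (Sym2 V)) (H H' : Set V) : Prop :=
  H.Nonempty ∧ H'.Nonempty ∧ Disjoint H H' ∧ H ∪ H' = Set.univ ∧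
  (∀ x ∈ H, ∀ y ∈ H, (G.deleteEdges C).Reachable x y) ∧
  (∀ x ∈ H', ∀ y ∈ H', (G.deleteEdges C).Reachable x y) ∧
  (∀ x ∈ H, ∀ y ∈ H', ¬ (G.deleteEdges C).Reachable x y)

/-- The boundary of a halfspace `H` of the Θ-class `C` : vertices of `H`
incident to an edge of `C`. -/
def boundarySet (G : SimpleGraph V) (C : Set (Sym2 V)) (H : Set V) : Set V :=
  {x | x ∈ H ∧ ∃ y, G.Adj x y ∧ s(x, y) ∈ C}

/-- Orthogonality of Θ-classes: there is a common square using both. -/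
def Orthogonal (G : SimpleGraph V) (C₁ C₂ : Set (Sym2 V)) : Prop :=
  ∃ u v x y : V, IsSquare G u v x y ∧
    s(u, v) ∈ C₁ ∧ s(x, y) ∈ C₁ ∧ s(u, x) ∈ C₂ ∧ s(v, y) ∈ C₂

/-- A pairwise orthogonal family (POF) of Θ-classes. -/
def IsPOF (G : SimpleGraph V) (X : Set (Set (Sym2 V))) : Prop :=
  (∀ C ∈ X, ThetaClass G C) ∧
  ∀ C ∈ X, ∀ C' ∈ X, C ≠ C' → Orthogonal G C C'

/-- The `k`-dimensional hypercube graph, on subsets of `{1,…,k}`;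
two subsets are adjacent iff their symmetric difference has one element. -/
def cubeGraph (k : ℕ) : SimpleGraph (Finset (Fin k)) where
  Adj A B := (symmDiff A B).card = 1
  symm := by
    constructor
    intro A B h
    rwa [symmDiff_comm] at h
  loopless := by
    constructor
    intro A h
    simp [symmDiff_self] at h

/-- `S` induces a hypercube of dimension `k` in `G`. -/
def IsCubeDim (G : SimpleGraph V) (S : Set V) (k : ℕ) : Prop :=
  Nonempty ((G.induce S) ≃g cubeGraph k)

/-- `S` induces a hypercube in `G`. -/
def IsInducedCube (G : SimpleGraph V) (S : Set V) : Prop :=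
  ∃ k, IsCubeDim G S k

/-- The dimension of `G` is `d`: the largest dimension of an induced hypercube. -/
def GraphDim (G : SimpleGraph V) (d : ℕ) : Prop :=
  (∃ S : Set V, IsCubeDim G S d) ∧ ∀ (S : Set V) (k : ℕ), IsCubeDim G S k → k ≤ d

/-- The Θ-classes of the edges of the induced subgraph on `S`. -/
def cubeClasses (G : SimpleGraph V) (S : Set V) : Set (Set (Sym2 V)) :=
  {C | ThetaClass G C ∧ ∃ x ∈ S, ∃ y ∈ S, G.Adj x y ∧ s(x, y) ∈ C}

/-- With the `v₀`-orientation, `b ∈ S` is the basis of `S`: all edges of `S`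
incident to `b` are outgoing from `b`. -/
def IsBasis (G : SimpleGraph V) (v₀ : V) (S : Set V) (b : V) : Prop :=
  b ∈ S ∧ ∀ w ∈ S, G.Adj b w → G.dist v₀ b < G.dist v₀ w

/-- With the `v₀`-orientation, `b ∈ S` is the anti-basis of `S`: all edges of `S`
incident to `b` are ingoing to `b`. -/
def IsAntiBasis (G : SimpleGraph V) (v₀ : V) (S : Set V) (b : V) : Prop :=
  b ∈ S ∧ ∀ w ∈ S, G.Adj b w → G.dist v₀ w < G.dist v₀ b

/-- `ℰ⁻(v)` : the Θ-classes containing at least one edge ingoing to `v`. -/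
def inClasses (G : SimpleGraph V) (v₀ v : V) : Set (Set (Sym2 V)) :=
  {C | ThetaClass G C ∧ ∃ u, G.Adj u v ∧ G.dist v₀ u < G.dist v₀ v ∧ s(u, v) ∈ C}

/-- The ladder set `L_{u,v}`: classes of the signature `σ_{u,v}` having an
edge incident to `u`. -/
def ladder (G : SimpleGraph V) (u v : V) : Set (Set (Sym2 V)) :=
  {C | C ∈ signature G u v ∧ ∃ w, G.Adj u w ∧ s(u, w) ∈ C}

/-- A POF each of whose classes has an edge outgoing from `u`. -/
def OutgoingPOF (G : SimpleGraph V) (v₀ u : V) (L : Set (Set (Sym2 V))) : Prop :=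
  IsPOF G L ∧ ∀ C ∈ L, ∃ w, G.Adj u w ∧ G.dist v₀ u < G.dist v₀ w ∧ s(u, w) ∈ C

/-- A POF each of whose classes has an edge ingoing to `u`. -/
def IngoingPOF (G : SimpleGraph V) (v₀ u : V) (X : Set (Set (Sym2 V))) : Prop :=
  IsPOF G X ∧ ∀ C ∈ X, ∃ w, G.Adj w u ∧ G.dist v₀ w < G.dist v₀ u ∧ s(w, u) ∈ C

/-- `m` is a median of the triple `x, y, z`. -/
def IsMedian (G : SimpleGraph V) (x y z m : V) : Prop :=
  m ∈ interval G x y ∧ m ∈ interval G y z ∧ m ∈ interval G z x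

/-- `b` is the milestone following `a` on the way to `v`: `b` is the anti-basis of
the induced hypercube with basis `a` whose Θ-classes are the ladder set `L_{a,v}`. -/
def NextMilestone (G : SimpleGraph V) (v₀ v a b : V) : Prop :=
  ∃ S : Set V, IsInducedCube G S ∧ IsBasis G v₀ S a ∧ IsAntiBasis G v₀ S b ∧
    cubeClasses G S = ladder G a v

/-- The milestone set `Π(u,v)`: vertices obtained from `u` by iterating the
next-milestone step towards `v`. -/
def MilestoneSet (G : SimpleGraph V) (v₀ u v : V) : Set V :=
  {p | Relation.ReflTransGen (fun a b => NextMilestone G v₀ v a b) u p}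

/-- The penultimate milestone `π̄(u,v)`: the milestone of `Π(u,v)` other than `v`
closest to `v`, i.e. whose next milestone is `v` itself. -/
def IsPenultimate (G : SimpleGraph V) (v₀ u v p : V) : Prop :=
  p ∈ MilestoneSet G v₀ u v ∧ p ≠ v ∧ NextMilestone G v₀ v p v

/-- A convex set of vertices. -/
def ConvexSet (G : SimpleGraph V) (H : Set V) : Prop :=
  ∀ u ∈ H, ∀ v ∈ H, interval G u v ⊆ H

/-- A gated set of vertices: each vertex has a gate in `H`. -/
def GatedSet (G : SimpleGraph V) (H : Set V) : Prop :=
  ∀ x : V, ∃ g ∈ H, ∀ h ∈ H, g ∈ interval G x h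

/-!
In a median graph every edge `ab` splits the vertices into the halfspaces
`W(a,b) = {w | d(w,a) < d(w,b)}` and `W(b,a)`. Opposite edges of a square induce the same split,
and every edge crossing the split of `ab` is joined to `ab` by a ladder of squares, so a Θ-class
is exactly the set of edges crossing one split, and no geodesic can leave a halfspace and return.

Two ingoing edges at `v` span a square (quadrangle condition), so `ℰ⁻(v)` is a POF. If
`ℰ⁻(v) ⊆ ℰ⁻(w)` but `v ∉ I(v₀,w)`, the last edge of a geodesic from `m(v₀,v,w)` to
`v` separates `v` from `v₀` and `w`, yet its class contains an edge ingoing to `w`, which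
is absurd; this gives injectivity and the minimality statement. Conversely, for a POF `X`
orthogonality makes any choice of one halfspace per class pairwise intersecting, so by the Helly
property of convex sets they have a common vertex. The gate `v` of `v₀` in the intersection of
the halfspaces of `X` avoiding `v₀` satisfies `ℰ⁻(v) = X`.
-/

section Intervals

variable {G : SimpleGraph V}

@[simp]
lemma mem_interval {u v w : V} : w ∈ interval G u v ↔ G.dist u w + G.dist w v = G.dist u v :=
  Iff.rfl

lemma interval_comm (u v : V) : interval G u v = interval G v u := by
  ext w
  grind [mem_interval, SimpleGraph.dist_comm]

lemma interval_subset_interval (hc : G.Connected) {x y z : V} (hy : y ∈ interval G x z) :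
    interval G x y ⊆ interval G x z := by
  intro t ht
  have := hc.dist_triangle (u := t) (v := y) (w := z)
  have := hc.dist_triangle (u := x) (v := t) (w := z)
  grind [mem_interval]

lemma eq_of_mem_interval_of_mem_interval (hc : G.Connected) {x y v : V}
    (hy : y ∈ interval G x v) (hv : v ∈ interval G x y) : y = v := by
  grind [mem_interval, SimpleGraph.dist_comm, hc.dist_eq_zero_iff]

lemma exists_adj_mem_interval (hc : G.Connected) {u v : V} (h : u ≠ v) :
    ∃ w, G.Adj u w ∧ w ∈ interval G u v := by
  obtain ⟨p, hp⟩ := hc.exists_walk_length_eq_dist u v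
  cases p with
  | nil => exact absurd rfl h
  | @cons _ w _ huw q =>
    have := SimpleGraph.dist_le q
    have := hc.dist_triangle (u := u) (v := w) (w := v)
    grind [mem_interval, SimpleGraph.Walk.length_cons, SimpleGraph.dist_eq_one_iff_adj]

lemma isMedian_of_adj_of_adj {u w z m : V} (hu : G.Adj m u) (hw : G.Adj m w)
    (huw : G.dist u w = 2) (hzu : G.dist z u = G.dist z m + 1) (hzw : G.dist z w = G.dist z m + 1) :
    IsMedian G u w z m := by
  grind [IsMedian, mem_interval, SimpleGraph.dist_comm, SimpleGraph.dist_eq_one_iff_adj]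

end Intervals

namespace MedianGraph

variable {G : SimpleGraph V} (hmed : MedianGraph G)
include hmed

lemma connected : G.Connected := hmed.1

lemma exists_isMedian (x y z : V) : ∃ m, IsMedian G x y z m := (hmed.2 x y z).exists

lemma isMedian_unique {x y z m m' : V} (h : IsMedian G x y z m) (h' : IsMedian G x y z m') :
    m = m' :=
  (hmed.2 x y z).unique h h'

lemma dist_ne_of_adj {a b : V} (hab : G.Adj a b) (w : V) : G.dist w a ≠ G.dist w b := by
  obtain ⟨m, h1, h2, h3⟩ := hmed.exists_isMedian a b w
  have hab1 := SimpleGraph.dist_eq_one_iff_adj.2 hab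
  have hm : m = a ∨ m = b := by grind [mem_interval, hmed.connected.dist_eq_zero_iff]
  rcases hm with rfl | rfl <;> grind [mem_interval, SimpleGraph.dist_comm]

lemma dist_eq_add_one_or {a b : V} (hab : G.Adj a b) (w : V) :
    G.dist w a = G.dist w b + 1 ∨ G.dist w b = G.dist w a + 1 := by
  have := hab.diff_dist_adj (u := w)
  have := hmed.dist_ne_of_adj hab w
  omega

lemma dist_eq_two_of_adj_of_adj {x u w : V} (hu : G.Adj x u) (hw : G.Adj x w) (hne : u ≠ w) :
    G.dist u w = 2 := by
  have := hmed.connected.dist_triangle (u := u) (v := x) (w := w)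
  have := hmed.dist_ne_of_adj (w := x) (a := u) (b := w)
  have := hmed.connected.dist_eq_zero_iff (u := u) (v := w)
  grind [SimpleGraph.dist_comm, SimpleGraph.dist_eq_one_iff_adj]

lemma exists_common_neighbor {u w z : V} (huw : G.dist u w = 2) (hz : G.dist z u = G.dist z w) :
    ∃ m, G.Adj m u ∧ G.Adj m w ∧ G.dist z u = G.dist z m + 1 := by
  obtain ⟨m, h1, h2, h3⟩ := hmed.exists_isMedian u w z
  refine ⟨m, ?_, ?_, ?_⟩ <;>
    grind [mem_interval, SimpleGraph.dist_comm, SimpleGraph.dist_eq_one_iff_adj]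

end MedianGraph

def halfspace (G : SimpleGraph V) (a b : V) : Set V := {w | G.dist w a < G.dist w b}

section Halfspaces

variable {G : SimpleGraph V}

lemma left_mem_halfspace {a b : V} (hab : G.Adj a b) : a ∈ halfspace G a b := by
  simp [halfspace, SimpleGraph.dist_eq_one_iff_adj.2 hab]

lemma MedianGraph.compl_halfspace (hmed : MedianGraph G) {a b : V} (hab : G.Adj a b) :
    (halfspace G a b)ᶜ = halfspace G b a := by
  ext w
  have := hmed.dist_eq_add_one_or hab w
  simp only [halfspace, Set.mem_compl_iff, Set.mem_ofPred_eq]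
  omega

lemma IsSquare.symm {u v x y : V} (h : IsSquare G u v x y) : IsSquare G x y u v :=
  ⟨h.2.1, h.1, h.2.2.1.symm, h.2.2.2.1.symm, h.2.2.2.2.2.symm, h.2.2.2.2.1.symm⟩

lemma IsSquare.swap {u v x y : V} (h : IsSquare G u v x y) : IsSquare G v u y x :=
  ⟨h.1.symm, h.2.1.symm, h.2.2.2.1, h.2.2.1, h.2.2.2.2.2, h.2.2.2.2.1⟩

lemma IsSquare.transpose {u v x y : V} (h : IsSquare G u v x y) : IsSquare G u x v y :=
  ⟨h.2.2.1, h.2.2.2.1, h.1, h.2.1, h.2.2.2.2.1, h.2.2.2.2.2.symm⟩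

lemma IsSquare.halfspace_eq (hmed : MedianGraph G) {u v x y : V} (h : IsSquare G u v x y) :
    halfspace G u v = halfspace G x y := by
  suffices key : ∀ {u v x y : V}, IsSquare G u v x y → halfspace G u v ⊆ halfspace G x y from
    (key h).antisymm (key h.symm)
  intro u v x y ⟨huv, hxy, hux, hvy, huy, hvx⟩ w hwu
  by_contra hwx
  simp only [halfspace, Set.mem_ofPred_eq] at hwu hwx
  have := hmed.dist_eq_add_one_or huv w
  have := hmed.dist_eq_add_one_or hxy w
  have := hmed.dist_eq_add_one_or hux w
  have := hmed.dist_eq_add_one_or hvy w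
  have hvx2 := hmed.dist_eq_two_of_adj_of_adj huv hux hvx
  -- `u` and `y` would both be the median of `v`, `x` and `w`
  exact huy (hmed.isMedian_unique
    (isMedian_of_adj_of_adj (z := w) huv hux hvx2 (by omega) (by omega))
    (isMedian_of_adj_of_adj (z := w) hvy.symm hxy.symm hvx2 (by omega) (by omega)))

end Halfspaces

section Theta

variable {G : SimpleGraph V}

instance : Std.Symm (Theta0 G) :=
  ⟨fun _ _ ⟨u, v, x, y, hsq, he, hf⟩ => ⟨x, y, u, v, hsq.symm, hf, he⟩⟩

lemma Theta0.halfspace_eq_or (hmed : MedianGraph G) {u v x y : V}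
    (h : Theta0 G s(u, v) s(x, y)) :
    halfspace G u v = halfspace G x y ∨ halfspace G u v = halfspace G y x := by
  obtain ⟨p, q, r, t, hsq, h1, h2⟩ := h
  rcases Sym2.eq_iff.1 h1 with ⟨rfl, rfl⟩ | ⟨rfl, rfl⟩ <;>
    rcases Sym2.eq_iff.1 h2 with ⟨rfl, rfl⟩ | ⟨rfl, rfl⟩
  · exact Or.inl (hsq.halfspace_eq hmed)
  · exact Or.inr (hsq.halfspace_eq hmed)
  · exact Or.inr (hsq.swap.halfspace_eq hmed)
  · exact Or.inl (hsq.swap.halfspace_eq hmed)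

lemma MedianGraph.halfspace_eq_or_of_reflTransGen (hmed : MedianGraph G) {u v : V} {f : Sym2 V}
    (h : Relation.ReflTransGen (Theta0 G) s(u, v) f) {x y : V} (hf : f = s(x, y)) :
    halfspace G u v = halfspace G x y ∨ halfspace G u v = halfspace G y x := by
  induction h generalizing x y with
  | refl =>
    rcases Sym2.eq_iff.1 hf with ⟨rfl, rfl⟩ | ⟨rfl, rfl⟩
    · exact Or.inl rfl
    · exact Or.inr rfl
  | @tail g f _ hgf ih =>
    subst hf
    induction g using Sym2.ind with
    | h p q =>
    rcases ih rfl with h | h <;> rw [h]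
    · exact hgf.halfspace_eq_or hmed
    · rw [Sym2.eq_swap] at hgf
      exact hgf.halfspace_eq_or hmed

lemma MedianGraph.halfspace_eq_of_reflTransGen (hmed : MedianGraph G) {u v x y z : V}
    (h : Relation.ReflTransGen (Theta0 G) s(u, v) s(x, y))
    (hzuv : z ∈ halfspace G u v) (hzxy : z ∈ halfspace G x y) :
    halfspace G u v = halfspace G x y := by
  refine (hmed.halfspace_eq_or_of_reflTransGen h rfl).resolve_right fun he => ?_
  rw [he] at hzuv
  exact lt_asymm (α := ℕ) hzuv hzxy

lemma MedianGraph.exists_theta0_crossing_closer (hmed : MedianGraph G) {a b x t : V}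
    (hab : G.Adj a b) (hxt : G.Adj x t) (hx : x ∈ halfspace G a b) (ht : t ∉ halfspace G a b)
    (hxa : x ≠ a) :
    ∃ x' m, G.Adj x' m ∧ x' ∈ halfspace G a b ∧ m ∉ halfspace G a b ∧
      G.dist x' a < G.dist x a ∧ Theta0 G s(x', m) s(x, t) := by
  obtain ⟨x', hxx', hx'⟩ := exists_adj_mem_interval hmed.connected hxa
  simp only [halfspace, Set.mem_ofPred_eq, not_lt, mem_interval] at hx ht hx' ⊢
  have := hmed.dist_eq_add_one_or hab x
  have := hmed.dist_eq_add_one_or hab t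
  have := hmed.dist_eq_add_one_or hab x'
  have := hmed.dist_eq_add_one_or hxt a
  have := hmed.dist_eq_add_one_or hxt b
  have := hmed.dist_eq_add_one_or hxx' b
  have := SimpleGraph.dist_eq_one_iff_adj.2 hxx'
  have hx't : x' ≠ t := by grind [SimpleGraph.dist_comm]
  obtain ⟨m, hmx', hmt, hbm⟩ := hmed.exists_common_neighbor
    (hmed.dist_eq_two_of_adj_of_adj hxx' hxt hx't) (z := b) (by grind [SimpleGraph.dist_comm])
  have := hmed.dist_eq_add_one_or hmt a
  have hsq : IsSquare G x' m x t :=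
    ⟨hmx'.symm, hxt, hxx'.symm, hmt, hx't, by grind [SimpleGraph.dist_comm]⟩
  refine ⟨x', m, hmx'.symm, ?_, ?_, ?_, x', m, x, t, hsq, rfl, rfl⟩ <;>
    grind [SimpleGraph.dist_comm]

lemma MedianGraph.reflTransGen_theta0_of_crossing (hmed : MedianGraph G) {a b x t : V}
    (hab : G.Adj a b) (hxt : G.Adj x t) (hx : x ∈ halfspace G a b)
    (ht : t ∉ halfspace G a b) :
    Relation.ReflTransGen (Theta0 G) s(a, b) s(x, t) := by
  induction hn : G.dist x a using Nat.strong_induction_on generalizing x t with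
  | _ n ih =>
  by_cases hxa : x = a
  · subst hxa
    have : G.dist t b = 0 := by
      have := hmed.dist_ne_of_adj hab t
      grind [halfspace, SimpleGraph.dist_comm, SimpleGraph.dist_eq_one_iff_adj]
    rw [hmed.connected.dist_eq_zero_iff.1 this]
  · obtain ⟨x', m, hx'm, hx', hm, hlt, hθ⟩ :=
      hmed.exists_theta0_crossing_closer hab hxt hx ht hxa
    exact (ih _ (hn ▸ hlt) hx'm hx' hm rfl).tail hθ

lemma MedianGraph.halfspace_eq_of_crossing (hmed : MedianGraph G) {a b x t : V} (hab : G.Adj a b)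
    (hxt : G.Adj x t) (hx : x ∈ halfspace G a b) (ht : t ∉ halfspace G a b) :
    halfspace G a b = halfspace G x t :=
  hmed.halfspace_eq_of_reflTransGen (hmed.reflTransGen_theta0_of_crossing hab hxt hx ht)
    hx (left_mem_halfspace hxt)

lemma MedianGraph.convexSet_halfspace (hmed : MedianGraph G) {a b : V} (hab : G.Adj a b) :
    ConvexSet G (halfspace G a b) := by
  have hc := hmed.connected
  suffices key : ∀ n {x z : V}, G.dist x z = n → x ∈ halfspace G a b →
      z ∈ halfspace G a b → interval G x z ⊆ halfspace G a b from
    fun x hx z hz => key _ rfl hx hz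
  intro n
  induction n with
  | zero =>
    intro x z hn hx _ w hw
    rw [hc.dist_eq_zero_iff] at hn
    subst hn
    rwa [eq_of_mem_interval_of_mem_interval hc hw (by simp)]
  | succ n ih =>
    intro x z hn hx hz w hw
    by_cases hwx : w = x
    · rwa [hwx]
    obtain ⟨x₁, hxx₁, hx₁⟩ := exists_adj_mem_interval hc (Ne.symm hwx)
    have hx₁z : x₁ ∈ interval G x z := interval_subset_interval hc hw hx₁
    -- otherwise `x x₁` splits like `ab`, and `z` would be closer to `x` than to `x₁`
    have hx₁W : x₁ ∈ halfspace G a b := by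
      by_contra hx₁W
      have hz' := hmed.halfspace_eq_of_crossing hab hxx₁ hx hx₁W ▸ hz
      simp only [halfspace, Set.mem_ofPred_eq, mem_interval] at hz' hx₁z
      grind [SimpleGraph.dist_comm, SimpleGraph.dist_eq_one_iff_adj]
    refine ih ?_ hx₁W hz ?_ <;>
      grind [mem_interval, SimpleGraph.dist_comm, SimpleGraph.dist_eq_one_iff_adj]

end Theta

section ThetaClasses

variable {G : SimpleGraph V} {C : Set (Sym2 V)}

lemma ThetaClass.mem_edgeSet (hC : ThetaClass G C) {f : Sym2 V} (hf : f ∈ C) :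
    f ∈ G.edgeSet := by
  obtain ⟨e, -, rfl⟩ := hC
  exact hf.2.1

lemma ThetaClass.reflTransGen (hC : ThetaClass G C) {f g : Sym2 V} (hf : f ∈ C) (hg : g ∈ C) :
    Relation.ReflTransGen (Theta0 G) f g := by
  obtain ⟨e, -, rfl⟩ := hC
  exact (symm hf.2.2).trans hg.2.2

lemma ThetaClass.mem_of_reflTransGen (hC : ThetaClass G C) {f g : Sym2 V} (hf : f ∈ C)
    (hfg : Relation.ReflTransGen (Theta0 G) f g) (hg : g ∈ G.edgeSet) : g ∈ C := by
  obtain ⟨e, -, rfl⟩ := hC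
  exact ⟨hf.1, hg, hf.2.2.trans hfg⟩

lemma ThetaClass.eq_of_mem (hC : ThetaClass G C) {C' : Set (Sym2 V)} (hC' : ThetaClass G C')
    {g : Sym2 V} (hg : g ∈ C) (hg' : g ∈ C') : C = C' := by
  ext f
  exact ⟨fun hf => hC'.mem_of_reflTransGen hg' (hC.reflTransGen hg hf) (hC.mem_edgeSet hf),
    fun hf => hC.mem_of_reflTransGen hg (hC'.reflTransGen hg' hf) (hC'.mem_edgeSet hf)⟩

lemma ThetaClass.exists_oriented_edge (hmed : MedianGraph G) (hC : ThetaClass G C) (v₀ : V) :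
    ∃ p q, G.Adj p q ∧ s(p, q) ∈ C ∧ v₀ ∈ halfspace G p q := by
  obtain ⟨e, he, rfl⟩ := hC
  induction e using Sym2.ind with
  | h u v =>
  have hC : s(u, v) ∈ {f | Theta G s(u, v) f} := ⟨he, he, .refl⟩
  rcases hmed.dist_eq_add_one_or he v₀ with h | h
  · exact ⟨v, u, he.symm, Sym2.eq_swap ▸ hC, by simp [halfspace, h]⟩
  · exact ⟨u, v, he, hC, by simp [halfspace, h]⟩

lemma ThetaClass.halfspace_eq (hmed : MedianGraph G) (hC : ThetaClass G C) {p q x y z : V}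
    (hpq : s(p, q) ∈ C) (hxy : s(x, y) ∈ C) (hzpq : z ∈ halfspace G p q)
    (hzxy : z ∈ halfspace G x y) : halfspace G p q = halfspace G x y :=
  hmed.halfspace_eq_of_reflTransGen (hC.reflTransGen hpq hxy) hzpq hzxy

lemma ThetaClass.mem_of_crossing (hmed : MedianGraph G) (hC : ThetaClass G C) {p q x t : V}
    (hpq : G.Adj p q) (hpqC : s(p, q) ∈ C) (hxt : G.Adj x t) (hx : x ∈ halfspace G p q)
    (ht : t ∉ halfspace G p q) : s(x, t) ∈ C :=
  hC.mem_of_reflTransGen hpqC (hmed.reflTransGen_theta0_of_crossing hpq hxt hx ht) hxt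

lemma Orthogonal.halfspace_inter_nonempty (hmed : MedianGraph G) {D : Set (Sym2 V)}
    (hC : ThetaClass G C) (hD : ThetaClass G D) (hCD : Orthogonal G C D) {p q p' q' : V}
    (hpq : s(p, q) ∈ C) (hpq' : s(p', q') ∈ D) :
    (halfspace G p q ∩ halfspace G p' q').Nonempty := by
  obtain ⟨u, v, x, y, hsq, huv, -, hux, -⟩ := hCD
  rcases hmed.halfspace_eq_or_of_reflTransGen (hC.reflTransGen hpq huv) rfl with hP | hP <;>
    rcases hmed.halfspace_eq_or_of_reflTransGen (hD.reflTransGen hpq' hux) rfl with hQ | hQ <;>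
    rw [hP, hQ]
  · exact ⟨u, left_mem_halfspace hsq.1, left_mem_halfspace hsq.2.2.1⟩
  · exact ⟨x, hsq.halfspace_eq hmed ▸ left_mem_halfspace hsq.2.1,
      left_mem_halfspace hsq.2.2.1.symm⟩
  · exact ⟨v, left_mem_halfspace hsq.1.symm,
      hsq.transpose.halfspace_eq hmed ▸ left_mem_halfspace hsq.2.2.2.1⟩
  · exact ⟨y, hsq.swap.halfspace_eq hmed ▸ left_mem_halfspace hsq.2.1.symm,
      hsq.transpose.swap.halfspace_eq hmed ▸ left_mem_halfspace hsq.2.2.2.1.symm⟩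

end ThetaClasses

section Helly

variable {G : SimpleGraph V}

lemma ConvexSet.inter {A B : Set V} (hA : ConvexSet G A) (hB : ConvexSet G B) :
    ConvexSet G (A ∩ B) :=
  fun x hx z hz _ hw => ⟨hA x hx.1 z hz.1 hw, hB x hx.2 z hz.2 hw⟩

lemma MedianGraph.helly3 (hmed : MedianGraph G) {A B C : Set V} (hA : ConvexSet G A)
    (hB : ConvexSet G B) (hC : ConvexSet G C) (hAB : (A ∩ B).Nonempty)
    (hBC : (B ∩ C).Nonempty) (hCA : (C ∩ A).Nonempty) : (A ∩ B ∩ C).Nonempty := by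
  obtain ⟨x, hxA, hxB⟩ := hAB
  obtain ⟨y, hyB, hyC⟩ := hBC
  obtain ⟨z, hzC, hzA⟩ := hCA
  obtain ⟨m, hm1, hm2, hm3⟩ := hmed.exists_isMedian x y z
  exact ⟨m, ⟨hA z hzA x hxA hm3, hB x hxB y hyB hm1⟩, hC y hyC z hzC hm2⟩

lemma MedianGraph.helly (hmed : MedianGraph G) {ι : Type*} (s : Finset ι) (f : ι → Set V)
    (hconv : ∀ i ∈ s, ConvexSet G (f i))
    (hpair : ∀ i ∈ s, ∀ j ∈ s, (f i ∩ f j).Nonempty) :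
    (⋂ i ∈ s, f i).Nonempty := by
  classical
  induction s using Finset.induction_on generalizing f with
  | empty =>
    obtain ⟨v⟩ := hmed.connected.nonempty
    exact ⟨v, by simp⟩
  | insert j t _ ih =>
    simp only [Finset.mem_insert, forall_eq_or_imp] at hconv hpair
    rw [Finset.set_biInter_insert]
    rcases t.eq_empty_or_nonempty with rfl | ⟨i₀, hi₀⟩
    · simpa using hpair.1.1
    -- cut every other set down to its trace on `f j`
    obtain ⟨x, hx⟩ := ih (fun i => f i ∩ f j) (fun i hi => (hconv.2 i hi).inter hconv.1)
      fun i hi k hk => by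
        obtain ⟨x, ⟨hxi, hxk⟩, hxj⟩ := hmed.helly3 (hconv.2 i hi) (hconv.2 k hk) hconv.1
          ((hpair.2 i hi).2 k hk) (hpair.2 k hk).1 (hpair.1.2 i hi)
        exact ⟨x, ⟨hxi, hxj⟩, hxk, hxj⟩
    simp only [Set.mem_iInter₂] at hx
    exact ⟨x, (hx i₀ hi₀).2, Set.mem_iInter₂.2 fun i hi => (hx i hi).1⟩

lemma MedianGraph.gatedSet (hmed : MedianGraph G) [Finite V] {K : Set V} (hK : ConvexSet G K)
    (hne : K.Nonempty) : GatedSet G K := by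
  intro x
  obtain ⟨g, hg, hmin⟩ := Set.exists_min_image K (G.dist x) K.toFinite hne
  refine ⟨g, hg, fun h hh => ?_⟩
  obtain ⟨m, hm1, hm2, hm3⟩ := hmed.exists_isMedian x g h
  have hmg : m = g := by
    have := hmin m (hK g hg h hh hm2)
    grind [mem_interval, hmed.connected.dist_eq_zero_iff]
  rwa [hmg, interval_comm] at hm3

lemma IsPOF.exists_forall_mem (hmed : MedianGraph G) [Finite V] {X : Set (Set (Sym2 V))}
    (hX : IsPOF G X) (f : Set (Sym2 V) → Set V)
    (hf : ∀ C ∈ X, ∃ p q, G.Adj p q ∧ s(p, q) ∈ C ∧ f C = halfspace G p q) :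
    ∃ z, ∀ C ∈ X, z ∈ f C := by
  have hfin := Set.toFinite X
  obtain ⟨z, hz⟩ := hmed.helly hfin.toFinset f
    (fun C hC => by
      obtain ⟨p, q, hpq, -, hfC⟩ := hf C (hfin.mem_toFinset.1 hC)
      exact hfC ▸ hmed.convexSet_halfspace hpq)
    (fun C hC D hD => by
      rw [hfin.mem_toFinset] at hC hD
      obtain ⟨p, q, hpq, hpqC, hfC⟩ := hf C hC
      by_cases hCD : C = D
      · rw [← hCD, Set.inter_self, hfC]
        exact ⟨p, left_mem_halfspace hpq⟩
      obtain ⟨p', q', -, hpqD, hfD⟩ := hf D hD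
      rw [hfC, hfD]
      exact (hX.2 C hC D hD hCD).halfspace_inter_nonempty hmed (hX.1 C hC) (hX.1 D hD) hpqC hpqD)
  exact ⟨z, fun C hC => Set.mem_iInter₂.1 hz C (hfin.mem_toFinset.2 hC)⟩

end Helly

/-- The halfspace of `C` containing `v₀`, written as a union so that no edge of `C` has to be
chosen; for a Θ-class all members of the union coincide. -/
def baseHalfspace (G : SimpleGraph V) (v₀ : V) (C : Set (Sym2 V)) : Set V :=
  {w | ∃ p q, s(p, q) ∈ C ∧ v₀ ∈ halfspace G p q ∧ w ∈ halfspace G p q}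

section BaseHalfspace

variable {G : SimpleGraph V} {C : Set (Sym2 V)}

lemma ThetaClass.exists_baseHalfspace_eq (hmed : MedianGraph G) (hC : ThetaClass G C) (v₀ : V) :
    ∃ p q, G.Adj p q ∧ s(p, q) ∈ C ∧ v₀ ∈ halfspace G p q ∧
      baseHalfspace G v₀ C = halfspace G p q ∧
      (baseHalfspace G v₀ C)ᶜ = halfspace G q p := by
  obtain ⟨p, q, hpq, hpqC, hv₀⟩ := hC.exists_oriented_edge hmed v₀
  have hbase : baseHalfspace G v₀ C = halfspace G p q := by
    ext w
    refine ⟨fun ⟨p', q', hC', hv₀', hw⟩ => ?_, fun hw => ⟨p, q, hpqC, hv₀, hw⟩⟩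
    rwa [hC.halfspace_eq hmed hpqC hC' hv₀ hv₀']
  exact ⟨p, q, hpq, hpqC, hv₀, hbase, hbase ▸ hmed.compl_halfspace hpq⟩

lemma ThetaClass.base_mem_baseHalfspace (hmed : MedianGraph G) (hC : ThetaClass G C) (v₀ : V) :
    v₀ ∈ baseHalfspace G v₀ C := by
  obtain ⟨p, q, -, -, hv₀, hbase, -⟩ := hC.exists_baseHalfspace_eq hmed v₀
  exact hbase ▸ hv₀

lemma ThetaClass.convexSet_baseHalfspace (hmed : MedianGraph G) (hC : ThetaClass G C) (v₀ : V) :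
    ConvexSet G (baseHalfspace G v₀ C) := by
  obtain ⟨p, q, hpq, -, -, hbase, -⟩ := hC.exists_baseHalfspace_eq hmed v₀
  exact hbase ▸ hmed.convexSet_halfspace hpq

lemma ThetaClass.convexSet_compl_baseHalfspace (hmed : MedianGraph G) (hC : ThetaClass G C)
    (v₀ : V) : ConvexSet G (baseHalfspace G v₀ C)ᶜ := by
  obtain ⟨p, q, hpq, -, -, -, hcompl⟩ := hC.exists_baseHalfspace_eq hmed v₀
  exact hcompl ▸ hmed.convexSet_halfspace hpq.symm

lemma ThetaClass.mem_of_crossing_baseHalfspace (hmed : MedianGraph G) (hC : ThetaClass G C)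
    {v₀ x t : V} (hxt : G.Adj x t) (hx : x ∈ baseHalfspace G v₀ C)
    (ht : t ∉ baseHalfspace G v₀ C) : s(x, t) ∈ C ∧ v₀ ∈ halfspace G x t := by
  obtain ⟨p, q, hpq, hpqC, hv₀, hbase, -⟩ := hC.exists_baseHalfspace_eq hmed v₀
  rw [hbase] at hx ht
  exact ⟨hC.mem_of_crossing hmed hpq hpqC hxt hx ht,
    hmed.halfspace_eq_of_crossing hpq hxt hx ht ▸ hv₀⟩

end BaseHalfspace

section InClasses

variable {G : SimpleGraph V}

lemma MedianGraph.isPOF_inClasses (hmed : MedianGraph G) (v₀ v : V) :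
    IsPOF G (inClasses G v₀ v) := by
  refine ⟨fun C hC => hC.1, ?_⟩
  rintro C ⟨hC, u₁, h₁, hlt₁, hu₁⟩ C' ⟨hC', u₂, h₂, hlt₂, hu₂⟩ hne
  have hu : u₁ ≠ u₂ := by
    rintro rfl
    exact hne (hC.eq_of_mem hC' hu₁ hu₂)
  have := hmed.dist_eq_add_one_or h₁ v₀
  have := hmed.dist_eq_add_one_or h₂ v₀
  obtain ⟨m, hmu₁, hmu₂, hm⟩ := hmed.exists_common_neighbor
    (hmed.dist_eq_two_of_adj_of_adj h₁.symm h₂.symm hu) (z := v₀) (by omega)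
  have hmv : m ≠ v := by
    rintro rfl
    omega
  have hsq : IsSquare G u₁ v m u₂ := ⟨h₁, hmu₂, hmu₁.symm, h₂.symm, hu, hmv.symm⟩
  refine ⟨u₁, v, m, u₂, hsq, hu₁,
    hC.mem_of_reflTransGen hu₁ (.single ⟨u₁, v, m, u₂, hsq, rfl, rfl⟩) hmu₂, ?_, ?_⟩
  · exact hC'.mem_of_reflTransGen hu₂
      (.single ⟨v, u₂, u₁, m, hsq.transpose.symm, Sym2.eq_swap, rfl⟩)
      hmu₁.symm
  · rwa [Sym2.eq_swap]

lemma MedianGraph.mem_interval_of_inClasses_subset (hmed : MedianGraph G) {v₀ v w : V}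
    (hsub : inClasses G v₀ v ⊆ inClasses G v₀ w) : v ∈ interval G v₀ w := by
  have hc := hmed.connected
  obtain ⟨m, hm₁, hm₂, hm₃⟩ := hmed.exists_isMedian v₀ v w
  by_cases hmv : m = v
  · rwa [hmv, interval_comm] at hm₃
  exfalso
  -- the last edge `u v` of a geodesic from `m` to `v` puts `v₀` and `w` on the side of `u`
  obtain ⟨u, hvu, hu⟩ := exists_adj_mem_interval hc (Ne.symm hmv)
  have hd := SimpleGraph.dist_eq_one_iff_adj.2 hvu
  have hv₀ : v₀ ∈ halfspace G u v := by
    have := interval_subset_interval hc (by rwa [interval_comm]) hu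
    grind [halfspace, mem_interval, SimpleGraph.dist_comm]
  have hw : w ∈ halfspace G u v := by
    have := interval_subset_interval hc hm₂ hu
    grind [halfspace, mem_interval, SimpleGraph.dist_comm]
  have he : s(u, v) ∈ G.edgeSet := hvu.symm
  obtain ⟨hC, w', hw'w, hv₀', hw'⟩ :=
    hsub ⟨⟨_, he, rfl⟩, u, hvu.symm, hv₀, he, he, .refl⟩
  have := hC.halfspace_eq hmed ⟨he, he, .refl⟩ hw' hv₀ hv₀' ▸ hw
  exact lt_asymm (α := ℕ) this (left_mem_halfspace hw'w.symm)

lemma MedianGraph.inClasses_injective (hmed : MedianGraph G) (v₀ : V) :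
    Function.Injective (inClasses G v₀) := fun _ _ h =>
  eq_of_mem_interval_of_mem_interval hmed.connected
    (hmed.mem_interval_of_inClasses_subset h.le)
    (hmed.mem_interval_of_inClasses_subset h.symm.le)

end InClasses

section Surjectivity

variable {G : SimpleGraph V} {v₀ v : V} {X : Set (Set (Sym2 V))}

lemma MedianGraph.inClasses_subset_of_gate (hmed : MedianGraph G) (hX : ∀ C ∈ X, ThetaClass G C)
    (hv : ∀ C ∈ X, v ∉ baseHalfspace G v₀ C)
    (hgate : ∀ w, (∀ C ∈ X, w ∉ baseHalfspace G v₀ C) → v ∈ interval G v₀ w) :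
    inClasses G v₀ v ⊆ X := by
  rintro C' ⟨hC', u, huv, hlt, hu⟩
  obtain ⟨C, hCX, huC⟩ : ∃ C ∈ X, u ∈ baseHalfspace G v₀ C := by
    by_contra! h
    have := hgate u h
    rw [mem_interval] at this
    omega
  obtain ⟨huvC, -⟩ := (hX C hCX).mem_of_crossing_baseHalfspace hmed huv huC (hv C hCX)
  rwa [hC'.eq_of_mem (hX C hCX) hu huvC]

lemma IsPOF.exists_mem_baseHalfspace_forall_not_mem (hmed : MedianGraph G) [Finite V]
    (hX : IsPOF G X) (v₀ : V) {C : Set (Sym2 V)} (hCX : C ∈ X) :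
    ∃ z, z ∈ baseHalfspace G v₀ C ∧
      ∀ D ∈ X, D ≠ C → z ∉ baseHalfspace G v₀ D := by
  obtain ⟨z, hz⟩ := hX.exists_forall_mem hmed
    (fun D => if D = C then baseHalfspace G v₀ D else (baseHalfspace G v₀ D)ᶜ)
    fun D hD => by
      obtain ⟨p, q, hpq, hpqD, -, hbase, hcompl⟩ :=
        (hX.1 D hD).exists_baseHalfspace_eq hmed v₀
      by_cases hDC : D = C
      · subst hDC
        exact ⟨p, q, hpq, hpqD, by simp [hbase]⟩
      · exact ⟨q, p, hpq.symm, Sym2.eq_swap ▸ hpqD, by simp [hDC, hcompl]⟩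
  exact ⟨z, by simpa using hz C hCX, fun D hD hDC => by simpa [hDC] using hz D hD⟩

lemma MedianGraph.subset_inClasses_of_gate (hmed : MedianGraph G) [Finite V] (hX : IsPOF G X)
    (hv : ∀ C ∈ X, v ∉ baseHalfspace G v₀ C)
    (hgate : ∀ w, (∀ C ∈ X, w ∉ baseHalfspace G v₀ C) → v ∈ interval G v₀ w) :
    X ⊆ inClasses G v₀ v := by
  have hc := hmed.connected
  intro C hCX
  have hC := hX.1 C hCX
  set A := {w | w ∈ baseHalfspace G v₀ C ∧
    ∀ D ∈ X, D ≠ C → w ∉ baseHalfspace G v₀ D}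
  have hA : ConvexSet G A := fun x hx z hz w hw =>
    ⟨hC.convexSet_baseHalfspace hmed v₀ x hx.1 z hz.1 hw, fun D hD hDC =>
      (hX.1 D hD).convexSet_compl_baseHalfspace hmed v₀ x (hx.2 D hD hDC) z (hz.2 D hD hDC) hw⟩
  have hAne : A.Nonempty := hX.exists_mem_baseHalfspace_forall_not_mem hmed v₀ hCX
  obtain ⟨g, hgA, hg⟩ := hmed.gatedSet hA hAne v
  have hbetween : ∀ w ∈ interval G v g, ∀ D ∈ X, D ≠ C → w ∉ baseHalfspace G v₀ D :=
    fun w hw D hD hDC =>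
      (hX.1 D hD).convexSet_compl_baseHalfspace hmed v₀ v (hv D hD) g (hgA.2 D hD hDC) hw
  have hfar : ∀ w ∈ interval G v g, w ∉ baseHalfspace G v₀ C → v ∈ interval G v₀ w :=
    fun w hw hwC => hgate w fun D hD => by
      by_cases hDC : D = C
      · rwa [hDC]
      · exact hbetween w hw D hD hDC
  -- the median of `v₀`, `v` and `g` is `g` itself
  obtain ⟨y, hy₁, hy₂, hy₃⟩ := hmed.exists_isMedian v₀ v g
  have hyC : y ∈ baseHalfspace G v₀ C := by
    by_contra hyC
    obtain rfl := eq_of_mem_interval_of_mem_interval hc hy₁ (hfar y hy₂ hyC)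
    exact hyC (hC.convexSet_baseHalfspace hmed v₀ v₀ (hC.base_mem_baseHalfspace hmed v₀) g
      hgA.1 (by rwa [interval_comm]))
  have hgv : g ∈ interval G v₀ v :=
    eq_of_mem_interval_of_mem_interval hc hy₂ (hg y ⟨hyC, hbetween y hy₂⟩) ▸ hy₁
  -- so `g` lies between `v₀` and `v`, and its neighbour towards `v` is `v`
  obtain ⟨q, hgq, hq⟩ := exists_adj_mem_interval hc (u := g) (v := v) (by
    rintro rfl
    exact hv C hCX hgA.1)
  rw [interval_comm] at hq
  have hqC : q ∉ baseHalfspace G v₀ C := fun hqC => by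
    have := hg q ⟨hqC, hbetween q hq⟩
    have := SimpleGraph.dist_eq_one_iff_adj.2 hgq
    grind [mem_interval, SimpleGraph.dist_comm]
  have hqv : q = v := by
    refine eq_of_mem_interval_of_mem_interval hc ?_ (hfar q hq hqC)
    rw [interval_comm] at hgv ⊢
    exact interval_subset_interval hc hgv hq
  subst hqv
  obtain ⟨hgqC, hv₀⟩ := hC.mem_of_crossing_baseHalfspace hmed hgq hgA.1 (hv C hCX)
  exact ⟨hC, g, hgq, hv₀, hgqC⟩

lemma MedianGraph.exists_inClasses_eq (hmed : MedianGraph G) [Finite V] (v₀ : V)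
    (hX : IsPOF G X) : ∃ v, inClasses G v₀ v = X := by
  set K := {w | ∀ C ∈ X, w ∉ baseHalfspace G v₀ C}
  have hK : ConvexSet G K := fun x hx z hz w hw C hC =>
    (hX.1 C hC).convexSet_compl_baseHalfspace hmed v₀ x (hx C hC) z (hz C hC) hw
  obtain ⟨z, hz⟩ := hX.exists_forall_mem hmed (fun C => (baseHalfspace G v₀ C)ᶜ)
    fun C hC => by
      obtain ⟨p, q, hpq, hpqC, -, -, hcompl⟩ := (hX.1 C hC).exists_baseHalfspace_eq hmed v₀
      exact ⟨q, p, hpq.symm, Sym2.eq_swap ▸ hpqC, hcompl⟩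
  obtain ⟨v, hvK, hgate⟩ := hmed.gatedSet hK ⟨z, hz⟩ v₀
  exact ⟨v, (hmed.inClasses_subset_of_gate hX.1 hvK hgate).antisymm
    (hmed.subset_inClasses_of_gate hX hvK hgate)⟩

end Surjectivity

/-- In a median graph with basepoint `v₀`, the map `v ↦ ℰ⁻(v)` is a
bijection from the vertex set onto the set of POFs; in particular the number of
POFs equals the number of vertices, and for every POF `X` the unique vertex `v`
with `ℰ⁻(v) = X` is the closest-to-`v₀` vertex `w` with `X ⊆ ℰ⁻(w)`. -/
theorem inClasses_bijection_pofs {V : Type*} [Fintype V] (G : SimpleGraph V)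
    (hmed : MedianGraph G) (v₀ : V) :
    (∀ v : V, IsPOF G (inClasses G v₀ v)) ∧
    Set.BijOn (fun v => inClasses G v₀ v) Set.univ {X | IsPOF G X} ∧
    {X : Set (Set (Sym2 V)) | IsPOF G X}.ncard = Fintype.card V ∧
    (∀ X : Set (Set (Sym2 V)), IsPOF G X → ∀ v, inClasses G v₀ v = X →
      ∀ w, X ⊆ inClasses G v₀ w → G.dist v₀ v ≤ G.dist v₀ w) := by
  have hbij : Set.BijOn (fun v => inClasses G v₀ v) Set.univ {X | IsPOF G X} :=
    ⟨fun v _ => hmed.isPOF_inClasses v₀ v, (hmed.inClasses_injective v₀).injOn,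
      fun X hX => (hmed.exists_inClasses_eq v₀ hX).imp fun _ hv => ⟨trivial, hv⟩⟩
  refine ⟨hmed.isPOF_inClasses v₀, hbij, ?_, ?_⟩
  · rw [← hbij.ncard_eq, Set.ncard_univ, Nat.card_eq_fintype_card]
  · rintro X - v rfl w hsub
    have := hmed.mem_interval_of_inClasses_subset hsub
    rw [mem_interval] at this
    omega

end MedianPaper
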